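/- arXiv:1107.1699 — 4 statements merged into one kernel-verified Lean document; each statement's English description precedes it below -/
import Mathlib

section
/- Let N ≥ 1 and let λ : Fin N → ℤ be a tuple of integer weights. For t ∈ ℂ with t ≠ 0, let g_t : (Fin N → ℂ) → (Fin N → ℂ) be the diagonal linear map (g_t v)_a = t^{λ_a} · v_a, and consider the induced action on the projective space ℙ(ℂ^N) (the projectivization of Fin N → ℂ) sending the class [v] of a nonzero vector v to [g_t v]. Suppose B ⊆ ℙ(ℂ^N) is a closed subset (in the standard topology) which is invariant under [v] ↦ [g_t v] for every t ≠ 0, and such that the set of nonzero vectors representing points of B spans ℂ^N (i.e. B is not contained in any proper projective-linear subspace). Then B contains a point represented by a nonzero vector v with v_a = 0 whenever λ_a < max_b λ_b, and B also contains a point represented by a nonzero vector w with w_a = 0 whenever λ_a > min_b λ_b. In particular these two points are fixed by the maps [v] ↦ [g_t v] for all t ≠ 0. -/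
/-!
For `|t| → ∞`, the point `[g_t v]` is also represented by `t ^ (-max λ) • g_t v`, whose coordinates
`t ^ (λ_a - max λ) v_a` tend to the part of `v` on the coordinates of maximal weight. Since the
vectors representing points of `B` span, one of them has a nonzero coordinate of maximal weight, so
this limit is nonzero, and it lies in `B` because `B` is closed. A vector supported on a single
weight is an eigenvector of every `g_t`, hence represents a fixed point. The minimal weight is the
maximal weight of `-λ`, whose action at `t` is that of `λ` at `t⁻¹`.
-/

open Projectivization Filter Topology Bornology
open scoped LinearAlgebra.Projectivization

instance projectivizationTopology (K V : Type*) [DivisionRing K] [AddCommGroup V]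
    [Module K V] [TopologicalSpace V] :
    TopologicalSpace (Projectivization K V) :=
  instTopologicalSpaceQuotient

variable {ι : Type*}

lemma exists_mem_apply_ne_zero_of_span_eq_top {R : Type*} [Semiring R] [Nontrivial R]
    {S : Set (ι → R)} (hS : Submodule.span R S = ⊤) (a : ι) : ∃ v ∈ S, v a ≠ 0 := by
  by_contra! h
  have hker : Submodule.span R S ≤ LinearMap.ker (LinearMap.proj a) := Submodule.span_le.mpr h
  rw [hS, top_le_iff] at hker
  have hone : (fun _ => 1 : ι → R) ∈ LinearMap.ker (LinearMap.proj a) := hker ▸ Submodule.mem_top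
  simp at hone

lemma Projectivization.mk_mem_of_tendsto {K V α : Type*} [DivisionRing K] [AddCommGroup V]
    [Module K V] [TopologicalSpace V] {B : Set (ℙ K V)} (hB : IsClosed B) {l : Filter α}
    [l.NeBot] {u : α → V} {w : V} (hw : w ≠ 0) (hu : Tendsto u l (𝓝 w))
    (huB : ∀ᶠ x in l, ∃ hx : u x ≠ 0, mk K (u x) hx ∈ B) : mk K w hw ∈ B := by
  have hC : IsClosed {x : {v : V // v ≠ 0} | mk' K x ∈ B} := hB.preimage continuous_quotient_mk'
  have hwC : (⟨w, hw⟩ : {v : V // v ≠ 0}) ∈ closure {x | mk' K x ∈ B} := by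
    rw [(Topology.IsInducing.subtypeVal (t := {v : V | v ≠ 0})).closure_eq_preimage_closure_image]
    refine closure_mono ?_ (mem_closure_of_tendsto (s := {v | ∃ hv : v ≠ 0, mk K v hv ∈ B}) hu huB)
    rintro v ⟨hv, hvB⟩
    exact ⟨⟨v, hv⟩, hvB, rfl⟩
  exact hC.closure_subset hwC

section Field

variable {𝕜 : Type*} [Field 𝕜] {lam : ι → ℤ} {t : 𝕜} {v : ι → 𝕜}

/-- The map `g_t` of the informal statement, for the weights `lam`. -/
def weightSmul (lam : ι → ℤ) (t : 𝕜) (v : ι → 𝕜) : ι → 𝕜 := fun a => t ^ lam a * v a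

lemma weightSmul_ne_zero (ht : t ≠ 0) (hv : v ≠ 0) : weightSmul lam t v ≠ 0 := by
  obtain ⟨a, ha⟩ := Function.ne_iff.mp hv
  exact Function.ne_iff.mpr ⟨a, mul_ne_zero (zpow_ne_zero _ ht) ha⟩

lemma weightSmul_neg : weightSmul (-lam) t v = weightSmul lam t⁻¹ v := by
  funext a
  simp [weightSmul, inv_zpow']

lemma weightSmul_add_const (c : ℤ) (ht : t ≠ 0) :
    weightSmul (fun a => lam a + c) t v = t ^ c • weightSmul lam t v := by
  funext a
  simp only [weightSmul, Pi.smul_apply, smul_eq_mul, zpow_add₀ ht]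
  ring

lemma weightSmul_eq_smul_of_forall_ne {c : ℤ} (hv : ∀ a, lam a ≠ c → v a = 0) :
    weightSmul lam t v = t ^ c • v := by
  funext a
  by_cases ha : lam a = c
  · simp [weightSmul, ha]
  · simp [weightSmul, hv a ha]

lemma mk_weightSmul_eq_of_forall_ne {c : ℤ} (ht : t ≠ 0) (hv : v ≠ 0)
    (hc : ∀ a, lam a ≠ c → v a = 0) :
    mk 𝕜 (weightSmul lam t v) (weightSmul_ne_zero ht hv) = mk 𝕜 v hv :=
  (mk_eq_mk_iff' 𝕜 _ _ _ _).mpr ⟨t ^ c, (weightSmul_eq_smul_of_forall_ne hc).symm⟩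

def IsWeightInvariant (lam : ι → ℤ) (B : Set (ℙ 𝕜 (ι → 𝕜))) : Prop :=
  ∀ t : 𝕜, ∀ ht : t ≠ 0, ∀ v : ι → 𝕜, ∀ hv : v ≠ 0,
    mk 𝕜 v hv ∈ B → mk 𝕜 (weightSmul lam t v) (weightSmul_ne_zero ht hv) ∈ B

variable {B : Set (ℙ 𝕜 (ι → 𝕜))}

lemma IsWeightInvariant.neg (hB : IsWeightInvariant lam B) : IsWeightInvariant (-lam) B := by
  intro t ht v hv hvB
  convert hB t⁻¹ (inv_ne_zero ht) v hv hvB using 2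
  exact weightSmul_neg

lemma IsWeightInvariant.add_const (hB : IsWeightInvariant lam B) (c : ℤ) :
    IsWeightInvariant (fun a => lam a + c) B := by
  intro t ht v hv hvB
  convert hB t ht v hv hvB using 1
  exact (mk_eq_mk_iff' 𝕜 _ _ _ _).mpr ⟨t ^ c, (weightSmul_add_const c ht).symm⟩

end Field

section Normed

variable {𝕜 : Type*} [NontriviallyNormedField 𝕜] {lam : ι → ℤ}

lemma tendsto_zpow_cobounded_of_neg {k : ℤ} (hk : k < 0) :
    Tendsto (fun t : 𝕜 => t ^ k) (cobounded 𝕜) (𝓝 0) := by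
  obtain ⟨n, rfl⟩ := Int.exists_eq_neg_ofNat hk.le
  have hn : n ≠ 0 := by omega
  simpa [zpow_neg, inv_pow, zero_pow hn] using (tendsto_inv₀_cobounded (α := 𝕜)).pow n

lemma tendsto_weightSmul_cobounded (hlam : ∀ a, lam a ≤ 0) (v : ι → 𝕜) :
    Tendsto (fun t => weightSmul lam t v) (cobounded 𝕜) (𝓝 ({a | lam a = 0}.indicator v)) := by
  refine tendsto_pi_nhds.mpr fun a => ?_
  by_cases ha : lam a = 0
  · simp [weightSmul, ha]
  · simpa [weightSmul, ha] using
      (tendsto_zpow_cobounded_of_neg ((hlam a).lt_of_ne ha)).mul_const (v a)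

lemma IsWeightInvariant.exists_mem_forall_ne_max {B : Set (ℙ 𝕜 (ι → 𝕜))} (hB : IsClosed B)
    (hinv : IsWeightInvariant lam B)
    (hspan : Submodule.span 𝕜 {v : ι → 𝕜 | ∃ hv : v ≠ 0, mk 𝕜 v hv ∈ B} = ⊤)
    {a₀ : ι} (hmax : ∀ a, lam a ≤ lam a₀) :
    ∃ (w : ι → 𝕜) (hw : w ≠ 0), mk 𝕜 w hw ∈ B ∧ ∀ a, lam a ≠ lam a₀ → w a = 0 := by
  obtain ⟨v, ⟨hv, hvB⟩, hva₀⟩ := exists_mem_apply_ne_zero_of_span_eq_top hspan a₀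
  set μ : ι → ℤ := fun a => lam a + -lam a₀
  have hμ : ∀ a, μ a = 0 ↔ lam a = lam a₀ := fun a => add_neg_eq_zero
  have hw : {a | μ a = 0}.indicator v ≠ 0 :=
    Function.ne_iff.mpr ⟨a₀, by simpa [Set.indicator_apply, μ] using hva₀⟩
  refine ⟨_, hw, mk_mem_of_tendsto hB hw
    (tendsto_weightSmul_cobounded (fun a => by linarith [hmax a]) v) ?_,
    fun a ha => Set.indicator_of_notMem (show a ∉ {a | μ a = 0} from mt (hμ a).mp ha) v⟩
  filter_upwards [eventually_ne_cobounded 0] with t ht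
  exact ⟨_, hinv.add_const (-lam a₀) t ht v hv hvB⟩

end Normed

/-- **Key claim in the proof of Lemma 5 of the paper.**
Let `λ : Fin N → ℤ` be integer weights and, for `t ≠ 0`, let `g t` be the diagonal map
`(g t v) a = t ^ (λ a) * v a` on `ℂ^N`.  If `B ⊆ ℙ(ℂ^N)` is a closed subset invariant under
the induced maps on projective space and the nonzero vectors representing points of `B`
span `ℂ^N`, then `B` contains a point represented by a vector supported on the components of
maximal weight, and a point represented by a vector supported on the components of minimal
weight; both points are fixed by all the induced maps. -/
theorem closed_invariant_set_contains_extremal_weight_points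
    (N : ℕ) (hN : 1 ≤ N) (lam : Fin N → ℤ)
    (B : Set (Projectivization ℂ (Fin N → ℂ)))
    (hBclosed : IsClosed B)
    (hBinv : ∀ (t : ℂ) (ht : t ≠ 0) (v : Fin N → ℂ) (hv : v ≠ 0),
      Projectivization.mk ℂ v hv ∈ B →
        Projectivization.mk ℂ (fun a => t ^ (lam a) * v a)
          (by
            intro h0
            obtain ⟨a, ha⟩ := Function.ne_iff.mp hv
            exact ha (by
              have := congrFun h0 a
              simp only [Pi.zero_apply, mul_eq_zero] at this
              rcases this with h | h
              · exact absurd h (zpow_ne_zero _ ht)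
              · exact h)) ∈ B)
    (hBspan : Submodule.span ℂ
      {v : Fin N → ℂ | ∃ hv : v ≠ 0, Projectivization.mk ℂ v hv ∈ B} = ⊤) :
    (∃ (v : Fin N → ℂ) (hv : v ≠ 0),
      Projectivization.mk ℂ v hv ∈ B ∧
      (∀ a : Fin N, lam a < Finset.univ.sup' (Finset.univ_nonempty_iff.mpr
          (Fin.pos_iff_nonempty.mp hN)) lam → v a = 0) ∧
      (∀ (t : ℂ) (ht : t ≠ 0),
        Projectivization.mk ℂ (fun a => t ^ (lam a) * v a)
          (by
            intro h0
            obtain ⟨a, ha⟩ := Function.ne_iff.mp hv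
            exact ha (by
              have := congrFun h0 a
              simp only [Pi.zero_apply, mul_eq_zero] at this
              rcases this with h | h
              · exact absurd h (zpow_ne_zero _ ht)
              · exact h)) = Projectivization.mk ℂ v hv)) ∧
    (∃ (w : Fin N → ℂ) (hw : w ≠ 0),
      Projectivization.mk ℂ w hw ∈ B ∧
      (∀ a : Fin N, Finset.univ.inf' (Finset.univ_nonempty_iff.mpr
          (Fin.pos_iff_nonempty.mp hN)) lam < lam a → w a = 0) ∧
      (∀ (t : ℂ) (ht : t ≠ 0),
        Projectivization.mk ℂ (fun a => t ^ (lam a) * w a)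
          (by
            intro h0
            obtain ⟨a, ha⟩ := Function.ne_iff.mp hw
            exact ha (by
              have := congrFun h0 a
              simp only [Pi.zero_apply, mul_eq_zero] at this
              rcases this with h | h
              · exact absurd h (zpow_ne_zero _ ht)
              · exact h)) = Projectivization.mk ℂ w hw)) := by
  have hne := Finset.univ_nonempty_iff.mpr (Fin.pos_iff_nonempty.mp hN)
  obtain ⟨aM, -, hM⟩ := Finset.exists_mem_eq_sup' hne lam
  obtain ⟨am, -, hm⟩ := Finset.exists_mem_eq_inf' hne lam
  have hinv : IsWeightInvariant lam B := hBinv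
  obtain ⟨v, hv, hvB, hvM⟩ := hinv.exists_mem_forall_ne_max hBclosed hBspan (a₀ := aM)
    fun a => hM ▸ Finset.le_sup' lam (Finset.mem_univ a)
  obtain ⟨w, hw, hwB, hwm⟩ := hinv.neg.exists_mem_forall_ne_max hBclosed hBspan (a₀ := am)
    fun a => neg_le_neg (hm ▸ Finset.inf'_le lam (Finset.mem_univ a))
  have hwm' : ∀ a, lam a ≠ lam am → w a = 0 := fun a ha => hwm a (by simpa using ha)
  exact ⟨⟨v, hv, hvB, fun a ha => hvM a (hM ▸ ha.ne), fun t ht => mk_weightSmul_eq_of_forall_ne ht hv hvM⟩,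
    ⟨w, hw, hwB, fun a ha => hwm' a (hm ▸ ha.ne'), fun t ht => mk_weightSmul_eq_of_forall_ne ht hw hwm'⟩⟩
end

section
/- Let A be the quotient ring ℂ[X, Y, Z, T]/(X·Y - T·Z) and let P ⊆ A be the ideal generated by the residue classes of Y and T. Then P is a prime ideal, and for every integer k ≥ 1 the power P^k is a P-primary ideal (that is, P^k is primary with radical P; equivalently, the k-th symbolic power of P coincides with P^k). -/
open MvPolynomial

/-- The coordinate ring `A = ℂ[X, Y, Z, T] / (X·Y - T·Z)` of the quadric cone, where the
variables `X, Y, Z, T` are indexed by `0, 1, 2, 3 : Fin 4`. -/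
@[reducible]
def QuadricCone : Type :=
  MvPolynomial (Fin 4) ℂ ⧸
    Ideal.span {(X 0 : MvPolynomial (Fin 4) ℂ) * X 1 - X 3 * X 2}

/-- The ideal `P ⊆ A` generated by the residue classes of `Y` and `T`, cutting out the
plane `B = {y = t = 0}` inside the quadric cone `{xy = tz}`. -/
noncomputable def QuadricCone.P : Ideal QuadricCone :=
  Ideal.span
    {Ideal.Quotient.mk _ (X 1 : MvPolynomial (Fin 4) ℂ),
     Ideal.Quotient.mk _ (X 3 : MvPolynomial (Fin 4) ℂ)}

/-!
Grade `A` by giving `Y` and `T` degree one and `X` and `Z` degree zero; the relation is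
homogeneous of degree one. Since `A` is generated over its degree-zero part by `Y` and `T`, which
generate `P`, the ideal `P ^ k` is exactly the set of elements whose components of degree `< k`
vanish. Encoding the grading as the ring map `A → A[t]`,
`a ↦ ∑ aᵢ tⁱ`, this says that `P ^ k` is the preimage of `(t ^ k)`. Since `XY - TZ` is
irreducible, `A` is a domain, so `t` is prime in `A[t]`, `(t ^ k)` is primary, and primary
ideals pull back to primary ideals.
-/

open scoped Polynomial

theorem Ideal.isPrimary_span_singleton_pow {R : Type*} [CommRing R] [IsDomain R] {p : R}
    (hp : Prime p) {k : ℕ} (hk : k ≠ 0) : (Ideal.span {p ^ k}).IsPrimary := by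
  refine Ideal.isPrimary_iff.mpr ⟨?_, fun {a b} hab => ?_⟩
  · rw [Ne, Ideal.span_singleton_eq_top, isUnit_pow_iff hk]
    exact hp.not_isUnit
  · rw [Ideal.mem_span_singleton] at hab
    by_cases hb : p ∣ b
    · exact Or.inr ⟨k, Ideal.mem_span_singleton.mpr (pow_dvd_pow_of_dvd hb k)⟩
    · exact Or.inl (Ideal.mem_span_singleton.mpr (hp.pow_dvd_of_dvd_mul_right k hb hab))

theorem Ideal.pow_eq_comap_span_X_pow {A F : Type*} [CommRing A] [FunLike F A A[X]]
    [RingHomClass F A A[X]] {P : Ideal A} {Φ : F} (heval : ∀ a, (Φ a).eval 1 = a)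
    (hrees : ∀ a, Φ a ∈ reesAlgebra P) (hP : P ≤ (Ideal.span {Polynomial.X}).comap Φ) (k : ℕ) :
    P ^ k = (Ideal.span {Polynomial.X ^ k}).comap Φ := by
  refine le_antisymm ?_ fun a ha => ?_
  · rw [← Ideal.map_le_iff_le_comap, Ideal.map_pow, ← Ideal.span_singleton_pow]
    exact Ideal.pow_right_mono (Ideal.map_le_iff_le_comap.mpr hP) k
  · obtain ⟨g, hg⟩ := Ideal.mem_span_singleton.mp ha
    rw [← heval a, Polynomial.eval_eq_sum_range]
    simp only [one_pow, mul_one]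
    refine Ideal.sum_mem _ fun i _ => ?_
    rcases lt_or_ge i k with hik | hki
    · rw [hg, Polynomial.coeff_X_pow_mul', if_neg (by omega)]
      exact Ideal.zero_mem _
    · exact Ideal.pow_le_pow_right hki (hrees a i)

theorem MvPolynomial.prime_X_mul_X_sub_X_mul_X {σ R : Type*} [CommRing R] [IsDomain R]
    [UniqueFactorizationMonoid R] {i j k l : σ} (hij : i ≠ j) (hik : i ≠ k) (hil : i ≠ l)
    (hjk : j ≠ k) (hjl : j ≠ l) : Prime (X i * X j - X k * X l : MvPolynomial σ R) := by
  classical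
  have hXi : ¬ (X i : MvPolynomial σ R) ∣ X k * X l := by
    intro h
    rcases X_prime.dvd_or_dvd h with h | h <;> simp_all [X_dvd_X]
  rw [sub_eq_add_neg]
  refine (irreducible_mul_X_add _ _ j (X_ne_zero i) ?_ ?_ ?_).prime
  · simpa [vars_X] using hij.symm
  · rw [vars_neg]
    intro h
    simpa [vars_X, hjk, hjl] using vars_mul _ _ h
  · exact X_prime.irreducible.isRelPrime_iff_not_dvd.mpr (by simpa using hXi)

namespace QuadricCone

instance : IsDomain QuadricCone :=
  have hf := prime_X_mul_X_sub_X_mul_X (R := ℂ) (i := (0 : Fin 4)) (j := 1) (k := 3) (l := 2)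
    (by decide) (by decide) (by decide) (by decide) (by decide)
  have := (Ideal.span_singleton_prime hf.ne_zero).mpr hf
  Ideal.Quotient.isDomain _

noncomputable def x (i : Fin 4) : QuadricCone := Ideal.Quotient.mk _ (X i)

theorem P_eq : P = Ideal.span {x 1, x 3} := rfl

theorem x_mul_x : x 0 * x 1 = x 3 * x 2 := by
  rw [← sub_eq_zero]
  exact Ideal.Quotient.eq_zero_iff_mem.mpr (Ideal.mem_span_singleton_self _)

def weight : Fin 4 → ℕ := ![0, 1, 0, 1]

theorem x_mem_P_pow_weight (i : Fin 4) : x i ∈ P ^ weight i := by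
  fin_cases i
  · simp [weight]
  · exact (pow_one P).symm ▸ Ideal.subset_span (by simp [x])
  · simp [weight]
  · exact (pow_one P).symm ▸ Ideal.subset_span (by simp [x])

noncomputable def coaction : QuadricCone →ₐ[ℂ] QuadricCone[X] :=
  Ideal.Quotient.liftₐ _ (aeval fun i => Polynomial.C (x i) * Polynomial.X ^ weight i) <| by
    intro a ha
    obtain ⟨c, rfl⟩ := Ideal.mem_span_singleton'.mp ha
    rw [map_mul, mul_eq_zero]
    right
    calc _ = Polynomial.C (x 0 * x 1 - x 3 * x 2) * Polynomial.X := by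
          simp [weight]
          ring
      _ = 0 := by rw [x_mul_x, sub_self, map_zero, zero_mul]

theorem coaction_x (i : Fin 4) : coaction (x i) = Polynomial.C (x i) * Polynomial.X ^ weight i :=
  aeval_X _ i

theorem eval_one_coaction (a : QuadricCone) : (coaction a).eval 1 = a := by
  have : ((Polynomial.aeval (1 : QuadricCone)).restrictScalars ℂ).comp coaction =
      AlgHom.id ℂ _ := by
    refine Ideal.Quotient.algHom_ext ℂ (MvPolynomial.algHom_ext fun i => ?_)
    simp [← x.eq_def, coaction_x]
  simpa using DFunLike.congr_fun this a

theorem coaction_mem_reesAlgebra (a : QuadricCone) : coaction a ∈ reesAlgebra P := by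
  obtain ⟨p, rfl⟩ := Ideal.Quotient.mk_surjective a
  induction p using MvPolynomial.induction_on with
  | C c =>
    rw [show Ideal.Quotient.mk _ (C c) = algebraMap ℂ QuadricCone c from rfl, AlgHom.commutes]
    exact (reesAlgebra P).algebraMap_mem _
  | add p q hp hq => rw [map_add, map_add]; exact add_mem hp hq
  | mul_X p i hp =>
    rw [map_mul, map_mul]
    refine mul_mem hp ?_
    rw [← x.eq_def, coaction_x, Polynomial.C_mul_X_pow_eq_monomial]
    exact reesAlgebra.monomial_mem.mpr (x_mem_P_pow_weight i)

theorem P_le_comap_coaction : P ≤ (Ideal.span {Polynomial.X}).comap coaction := by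
  have hX (i) (hi : weight i = 1) : x i ∈ (Ideal.span {Polynomial.X}).comap coaction := by
    rw [Ideal.mem_comap, coaction_x, hi, pow_one]
    exact Ideal.mul_mem_left _ _ (Ideal.mem_span_singleton_self _)
  rw [P_eq, Ideal.span_le, Set.insert_subset_iff, Set.singleton_subset_iff]
  exact ⟨hX 1 rfl, hX 3 rfl⟩

end QuadricCone

open QuadricCone in
/-- **Verification of the paper's technical condition (Section 3, first example).**
In `A = ℂ[X, Y, Z, T]/(X·Y - T·Z)`, the ideal `P = (Y, T)` is prime, and for every `k ≥ 1`
the power `P ^ k` is a `P`-primary ideal (it is primary with radical `P`); equivalently the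
`k`-th symbolic power of `P` coincides with `P ^ k`. -/
theorem quadricCone_plane_ideal_powers_primary :
    QuadricCone.P.IsPrime ∧
      ∀ k : ℕ, 1 ≤ k →
        (QuadricCone.P ^ k).IsPrimary ∧ (QuadricCone.P ^ k).radical = QuadricCone.P := by
  have hpow :=
    Ideal.pow_eq_comap_span_X_pow eval_one_coaction coaction_mem_reesAlgebra P_le_comap_coaction
  have hprime : P.IsPrime := by
    have := (Ideal.span_singleton_prime Polynomial.X_ne_zero).mpr
      (Polynomial.prime_X : Prime (Polynomial.X : QuadricCone[X]))
    rw [← pow_one P, hpow, pow_one]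
    exact Ideal.comap_isPrime _ _
  refine ⟨hprime, fun k hk => ⟨?_, by rw [Ideal.radical_pow _ (by omega), hprime.radical]⟩⟩
  rw [hpow]
  exact (Ideal.isPrimary_span_singleton_pow Polynomial.prime_X (by omega)).comap _
end

section
/- Let A be the quotient ring ℂ[X, Y, Z, T]/(X·Y - T·Z), let m ⊆ A be the maximal ideal generated by the residue classes of X, Y, Z, T, and let P ⊆ A be the ideal generated by the residue classes of Y and T. Then the ideal generated by the image of P in the localization A_m of A at m is not a principal ideal. -/
/-!
Map `A` to the trivial square-zero extension `ℂ ⊕ ℂ²` by `X, Z ↦ 0`, `Y ↦ (1, 0)`,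
`T ↦ (0, 1)`; both monomials of `XY - TZ` go to `0`. The `ℂ`-component of the image of `a` is
the value of `a` at the vertex, so elements outside `m` become units and the map factors through
`A_m`. It sends `P` onto the ideal generated by the two basis vectors of `ℂ²`, which is not
principal: a generator would lie in `ℂ²` itself, and its multiples span only a line.
-/

open MvPolynomial

/-- The ideal `m ⊆ A` generated by the residue classes of `X, Y, Z, T` (the vertex of the
cone). -/
noncomputable def QuadricCone.m : Ideal QuadricCone :=
  Ideal.span
    {Ideal.Quotient.mk _ (X 0 : MvPolynomial (Fin 4) ℂ),
     Ideal.Quotient.mk _ (X 1 : MvPolynomial (Fin 4) ℂ),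
     Ideal.Quotient.mk _ (X 2 : MvPolynomial (Fin 4) ℂ),
     Ideal.Quotient.mk _ (X 3 : MvPolynomial (Fin 4) ℂ)}

theorem MvPolynomial.ker_constantCoeff_eq_idealOfVars {σ R : Type*} [CommSemiring R] :
    RingHom.ker (constantCoeff : MvPolynomial σ R →+* R) = idealOfVars σ R := by
  ext p
  rw [← pow_one (idealOfVars σ R), mem_pow_idealOfVars_iff', RingHom.mem_ker]
  simp [Finsupp.degree_eq_zero_iff, constantCoeff_eq]

theorem IsLocalization.isPrincipal_map_of_isPrincipal_map_algebraMap {R S T : Type*}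
    [CommSemiring R] [CommSemiring S] [Algebra R S] [CommSemiring T] (M : Submonoid R)
    [IsLocalization M S]
    {f : R →+* T} (hf : ∀ s : M, IsUnit (f s)) {I : Ideal R}
    (hI : (I.map (algebraMap R S)).IsPrincipal) : (I.map f).IsPrincipal := by
  rw [← IsLocalization.lift_comp (S := S) hf, ← Ideal.map_map]
  exact hI.map_ringHom _

theorem TrivSqZeroExt.not_isPrincipal_span_inr_pair {R M : Type*} [CommRing R] [Nontrivial R]
    [AddCommGroup M] [Module R M] [Module Rᵐᵒᵖ M] [IsCentralScalar R M] {x y : M}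
    (hxy : LinearIndependent R ![x, y]) :
    ¬ (Ideal.span {inr x, inr y} : Ideal (TrivSqZeroExt R M)).IsPrincipal := by
  rintro ⟨g, hg⟩
  rw [Ideal.submodule_span_eq] at hg
  have hg_fst : g.fst = 0 := by
    have hle : Ideal.span {inr x, inr y} ≤ RingHom.ker (fstHom R R M) := by
      simp [Ideal.span_le, Set.insert_subset_iff]
    exact hle (hg ▸ Ideal.mem_span_singleton_self g)
  have smul_of_mem {z : M} (hz : inr z ∈ Ideal.span {g}) : ∃ a : R, z = a • g.snd := by
    obtain ⟨a, ha⟩ := Ideal.mem_span_singleton'.mp hz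
    exact ⟨a.fst, by simpa [snd_mul, hg_fst] using (congrArg snd ha).symm⟩
  obtain ⟨a, rfl⟩ := smul_of_mem (z := x) (hg ▸ Ideal.subset_span (by simp))
  obtain ⟨b, hb⟩ := smul_of_mem (z := y) (hg ▸ Ideal.subset_span (by simp))
  obtain ⟨-, ha0⟩ := LinearIndependent.pair_iff.mp hxy b (-a) (by
    rw [hb, smul_smul, smul_smul, mul_comm, ← add_smul, neg_mul, add_neg_cancel, zero_smul])
  exact hxy.ne_zero 0 (by simp [neg_eq_zero.mp ha0])

namespace QuadricCone

open TrivSqZeroExt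

noncomputable def evalVertex : QuadricCone →+* ℂ :=
  Ideal.Quotient.lift _ constantCoeff fun p hp => by
    obtain ⟨c, rfl⟩ := Ideal.mem_span_singleton'.mp hp
    simp

theorem m_eq_ker_evalVertex : m = RingHom.ker evalVertex := by
  rw [← Ideal.map_comap_of_surjective _ Ideal.Quotient.mk_surjective (RingHom.ker evalVertex),
    RingHom.comap_ker, evalVertex, Ideal.Quotient.lift_comp_mk,
    ker_constantCoeff_eq_idealOfVars, Ideal.map_span, m]
  congr 1
  ext
  simp [Fin.exists_fin_succ, eq_comm]

theorem m_isMaximal : m.IsMaximal :=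
  m_eq_ker_evalVertex ▸ RingHom.ker_isMaximal_of_surjective _ fun c =>
    ⟨Ideal.Quotient.mk _ (C c), by simp [evalVertex]⟩

noncomputable def toTrivSqZeroExt : QuadricCone →+* TrivSqZeroExt ℂ (ℂ × ℂ) :=
  Ideal.Quotient.lift _ (aeval ![0, inr (1, 0), 0, inr (0, 1)]).toRingHom fun p hp => by
    obtain ⟨c, rfl⟩ := Ideal.mem_span_singleton'.mp hp
    simp

theorem fst_toTrivSqZeroExt (a : QuadricCone) : (toTrivSqZeroExt a).fst = evalVertex a := by
  obtain ⟨p, rfl⟩ := Ideal.Quotient.mk_surjective a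
  induction p using MvPolynomial.induction_on with
  | C c => simp [toTrivSqZeroExt, evalVertex, algebraMap_eq_inl]
  | add p q hp hq => simp_all
  | mul_X p i hp =>
    fin_cases i <;> simp_all [toTrivSqZeroExt, evalVertex]

theorem isUnit_toTrivSqZeroExt {a : QuadricCone} (ha : a ∉ m) : IsUnit (toTrivSqZeroExt a) := by
  rw [isUnit_iff_isUnit_fst, fst_toTrivSqZeroExt, isUnit_iff_ne_zero]
  rwa [m_eq_ker_evalVertex] at ha

theorem map_P_toTrivSqZeroExt :
    P.map toTrivSqZeroExt = Ideal.span {inr (1, 0), inr (0, 1)} := by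
  simp [P, Ideal.map_span, Set.image_insert_eq, toTrivSqZeroExt]

end QuadricCone

/-- **The plane `B` is not a Cartier divisor (Section 3 of the paper).**
In `A = ℂ[X, Y, Z, T]/(X·Y - T·Z)`, the ideal `m = (X, Y, Z, T)` is maximal, and the ideal
generated by the image of `P = (Y, T)` in the localization `A_m` of `A` at `m` is not
principal. -/
theorem quadricCone_plane_not_cartier_at_vertex :
    ∃ hm : QuadricCone.m.IsMaximal,
      ¬ (Ideal.map
          (algebraMap QuadricCone
            (Localization (@Ideal.primeCompl QuadricCone _ QuadricCone.m hm.isPrime)))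
          QuadricCone.P).IsPrincipal := by
  refine ⟨QuadricCone.m_isMaximal, fun hP => ?_⟩
  have := QuadricCone.m_isMaximal.isPrime
  have hmap := IsLocalization.isPrincipal_map_of_isPrincipal_map_algebraMap
    (S := Localization QuadricCone.m.primeCompl) QuadricCone.m.primeCompl
    (fun s => QuadricCone.isUnit_toTrivSqZeroExt s.2) hP
  rw [QuadricCone.map_P_toTrivSqZeroExt] at hmap
  exact TrivSqZeroExt.not_isPrincipal_span_inr_pair
    (LinearIndependent.pair_iff.mpr fun s t h => by simpa using h) hmap
end

section
/- Let A be a commutative ring and let φ₁, φ₂ : A → ℂ[[s]] be ring homomorphisms into the ring of formal power series over ℂ such that constantCoeff(φ₁(a)) = constantCoeff(φ₂(a)) for every a ∈ A. Let t ∈ A be such that for i = 1, 2 one has φᵢ(t) ≠ 0 and constantCoeff(φᵢ(t)) = 0. Let ι be an index set, σ : ι → A, and μ : ι → ℕ with μ_a ≥ 1 for all a, and suppose that for each a ∈ ι and i = 1, 2 there exists h_{a,i} ∈ ℂ[[s]] with φᵢ(σ_a) = φᵢ(t)^{μ_a} · h_{a,i}, and that constantCoeff(h_{a,1}) = constantCoeff(h_{a,2}).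 Then for every integer ν ≥ 1 and every element τ of the ν-th power of the ideal of A generated by the set {σ_a : a ∈ ι}, there exist g₁, g₂ ∈ ℂ[[s]] with φᵢ(τ) = φᵢ(t)^ν · gᵢ for i = 1, 2 and constantCoeff(g₁) = constantCoeff(g₂). -/
/-!
Put `φ = (φ₁, φ₂)` and let `D ⊆ ℂ[[s]] × ℂ[[s]]` be the subring of pairs with equal constant
coefficients. By hypothesis `φ` takes values in `D`, so the assertion is that `φ(t) ^ ν` divides
`φ(τ)` in `D`. Each generator satisfies `φ(σ a) = φ(t) ^ μ a · h` with `h ∈ D` and `μ a ≥ 1`,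
so `φ(t)` divides `φ(σ a)` in `D`; divisibility of the generators by `φ(t)` then gives
divisibility of the whole `ν`-th power of the ideal they generate by `φ(t) ^ ν`.
-/

theorem Ideal.pow_dvd_map_of_mem_span_pow {A B : Type*} [CommSemiring A] [CommSemiring B]
    (ψ : A →+* B) {s : Set A} {p : B} (hs : ∀ x ∈ s, p ∣ ψ x) {ν : ℕ} {τ : A}
    (hτ : τ ∈ Ideal.span s ^ ν) : p ^ ν ∣ ψ τ := by
  have hspan : (Ideal.span s).map ψ ≤ Ideal.span {p} := by
    rw [Ideal.map_span, Ideal.span_le]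
    rintro _ ⟨x, hx, rfl⟩
    exact Ideal.mem_span_singleton.2 (hs x hx)
  have hpow := Ideal.pow_right_mono hspan ν
  rw [← Ideal.map_pow, Ideal.span_singleton_pow] at hpow
  exact Ideal.mem_span_singleton.1 (hpow (Ideal.mem_map_of_mem ψ hτ))

section MatchingPairs

variable {R S : Type*} [CommRing R] [CommRing S]

def matchingPairs (c : R →+* S) : Subring (R × R) :=
  (c.comp (RingHom.fst R R)).eqLocus (c.comp (RingHom.snd R R))

theorem matchingPairs_dvd_iff {c : R →+* S} {p x : matchingPairs c} :
    p ∣ x ↔ ∃ g₁ g₂ : R, (x : R × R).1 = (p : R × R).1 * g₁ ∧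
      (x : R × R).2 = (p : R × R).2 * g₂ ∧ c g₁ = c g₂ := by
  constructor
  · rintro ⟨⟨⟨g₁, g₂⟩, hg⟩, rfl⟩
    exact ⟨g₁, g₂, rfl, rfl, hg⟩
  · rintro ⟨g₁, g₂, h₁, h₂, hg⟩
    exact ⟨⟨(g₁, g₂), hg⟩, Subtype.ext (Prod.ext h₁ h₂)⟩

def RingHom.prodMatching {A : Type*} [CommRing A] (c : R →+* S) (φ₁ φ₂ : A →+* R)
    (hφ : ∀ a, c (φ₁ a) = c (φ₂ a)) : A →+* matchingPairs c :=
  (φ₁.prod φ₂).codRestrict (matchingPairs c) hφ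

@[simp]
theorem RingHom.coe_prodMatching_apply {A : Type*} [CommRing A] (c : R →+* S)
    (φ₁ φ₂ : A →+* R) (hφ : ∀ a, c (φ₁ a) = c (φ₂ a)) (a : A) :
    (prodMatching c φ₁ φ₂ hφ a : R × R) = (φ₁ a, φ₂ a) :=
  rfl

end MatchingPairs

theorem arcs_same_limit_on_ideal_powers_general
    (A : Type*) [CommRing A]
    (φ₁ φ₂ : A →+* PowerSeries ℂ)
    (hφ : ∀ a : A, PowerSeries.constantCoeff (R := ℂ) (φ₁ a) = PowerSeries.constantCoeff (R := ℂ) (φ₂ a))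
    (t : A)
    (ι : Type*) (σ : ι → A) (μ : ι → ℕ) (hμ : ∀ a : ι, 1 ≤ μ a)
    (hσ : ∀ a : ι, ∃ h₁ h₂ : PowerSeries ℂ,
      φ₁ (σ a) = (φ₁ t) ^ (μ a) * h₁ ∧
      φ₂ (σ a) = (φ₂ t) ^ (μ a) * h₂ ∧
      PowerSeries.constantCoeff (R := ℂ) h₁ = PowerSeries.constantCoeff (R := ℂ) h₂)
    (ν : ℕ)
    (τ : A) (hτ : τ ∈ (Ideal.span (Set.range σ)) ^ ν) :
    ∃ g₁ g₂ : PowerSeries ℂ,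
      φ₁ τ = (φ₁ t) ^ ν * g₁ ∧
      φ₂ τ = (φ₂ t) ^ ν * g₂ ∧
      PowerSeries.constantCoeff (R := ℂ) g₁ = PowerSeries.constantCoeff (R := ℂ) g₂ := by
  set ψ := RingHom.prodMatching (PowerSeries.constantCoeff (R := ℂ)) φ₁ φ₂ hφ
  have hgen : ∀ x ∈ Set.range σ, ψ t ∣ ψ x := by
    rintro _ ⟨a, rfl⟩
    have hdvd : ψ t ^ μ a ∣ ψ (σ a) := matchingPairs_dvd_iff.2 (by simpa [ψ] using hσ a)
    exact (dvd_pow_self _ (Nat.one_le_iff_ne_zero.1 (hμ a))).trans hdvd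
  simpa [ψ] using matchingPairs_dvd_iff.1 (Ideal.pow_dvd_map_of_mem_span_pow ψ hgen hτ)

/-- **Algebraic core of Lemma 4 of the paper.**
Let `φ₁, φ₂ : A → ℂ[[s]]` be ring homomorphisms agreeing at the constant coefficient,
`t ∈ A` with `φᵢ t ≠ 0` of positive order, and `σ : ι → A`, `μ : ι → ℕ` with `μ a ≥ 1`
such that `φᵢ (σ a)` is divisible by `(φᵢ t) ^ (μ a)` with quotients having matching
constant coefficients.  Then for every `ν ≥ 1` and every `τ` in the `ν`-th power of the
ideal generated by the `σ a`, the images `φᵢ τ` are divisible by `(φᵢ t) ^ ν` with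
quotients `g₁, g₂` having the same constant coefficient. -/
theorem arcs_same_limit_on_ideal_powers
    (A : Type*) [CommRing A]
    (φ₁ φ₂ : A →+* PowerSeries ℂ)
    (hφ : ∀ a : A, PowerSeries.constantCoeff (R := ℂ) (φ₁ a) = PowerSeries.constantCoeff (R := ℂ) (φ₂ a))
    (t : A)
    (ht₁ : φ₁ t ≠ 0) (ht₂ : φ₂ t ≠ 0)
    (ht₁0 : PowerSeries.constantCoeff (R := ℂ) (φ₁ t) = 0)
    (ht₂0 : PowerSeries.constantCoeff (R := ℂ) (φ₂ t) = 0)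
    (ι : Type*) (σ : ι → A) (μ : ι → ℕ) (hμ : ∀ a : ι, 1 ≤ μ a)
    (hσ : ∀ a : ι, ∃ h₁ h₂ : PowerSeries ℂ,
      φ₁ (σ a) = (φ₁ t) ^ (μ a) * h₁ ∧
      φ₂ (σ a) = (φ₂ t) ^ (μ a) * h₂ ∧
      PowerSeries.constantCoeff (R := ℂ) h₁ = PowerSeries.constantCoeff (R := ℂ) h₂)
    (ν : ℕ) (hν : 1 ≤ ν)
    (τ : A) (hτ : τ ∈ (Ideal.span (Set.range σ)) ^ ν) :
    ∃ g₁ g₂ : PowerSeries ℂ,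
      φ₁ τ = (φ₁ t) ^ ν * g₁ ∧
      φ₂ τ = (φ₂ t) ^ ν * g₂ ∧
      PowerSeries.constantCoeff (R := ℂ) g₁ = PowerSeries.constantCoeff (R := ℂ) g₂ :=
  arcs_same_limit_on_ideal_powers_general A φ₁ φ₂ hφ t ι σ μ hμ hσ ν τ hτ
end
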